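/- arXiv:2006.05008 — 2 statements merged into one kernel-verified Lean document; each statement's English description precedes it below -/
import Mathlib

section
/- Let H be a finite-dimensional real inner product space, T : H → H symmetric positive definite, W : H → H symmetric positive semidefinite, and τ > 0 such that ⟨T u, u⟩ ≥ (τ²/4)⟨W u, u⟩ for all u ∈ H. Then for all a, b ∈ H, the discrete energy ½⟨T ((a-b)/τ), (a-b)/τ⟩ + ½⟨W a, b⟩ is nonnegative. -/
/-!
By polarization, `⟪W a, b⟫ = (⟪W (a + b), a + b⟫ - ⟪W (a - b), a - b⟫) / 4`. The CFL condition
applied to `a - b` lets the kinetic term `⟪T (a - b), a - b⟫ / (2τ²)` absorb the negative part,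
so the energy is at least `⟪W (a + b), a + b⟫ / 8 ≥ 0`.
-/

open scoped RealInnerProductSpace

section DiscreteEnergy

variable {H : Type*} [NormedAddCommGroup H] [InnerProductSpace ℝ H]

noncomputable def discreteEnergy (T W : H →ₗ[ℝ] H) (τ : ℝ) (a b : H) : ℝ :=
  (1/2 : ℝ) * ⟪T ((1/τ) • (a - b)), (1/τ) • (a - b)⟫ + (1/2 : ℝ) * ⟪W a, b⟫

theorem LinearMap.IsSymmetric.real_inner_map_polarization {W : H →ₗ[ℝ] H} (hW : W.IsSymmetric)
    (a b : H) : ⟪W a, b⟫ = (⟪W (a + b), a + b⟫ - ⟪W (a - b), a - b⟫) / 4 := by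
  simpa using hW.inner_map_polarization a b

theorem inner_map_smul_smul (T : H →ₗ[ℝ] H) (c : ℝ) (u : H) :
    ⟪T (c • u), c • u⟫ = c ^ 2 * ⟪T u, u⟫ := by
  rw [map_smul, real_inner_smul_left, real_inner_smul_right]
  ring

theorem inner_map_add_div_eight_le_discreteEnergy (T W : H →ₗ[ℝ] H) (hW : W.IsSymmetric)
    {τ : ℝ} (hτ : τ ≠ 0) (a b : H)
    (hCFL : τ ^ 2 / 4 * ⟪W (a - b), a - b⟫ ≤ ⟪T (a - b), a - b⟫) :
    ⟪W (a + b), a + b⟫ / 8 ≤ discreteEnergy T W τ a b := by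
  have hkinetic : ⟪W (a - b), a - b⟫ / 4 ≤ (1 / τ) ^ 2 * ⟪T (a - b), a - b⟫ := by
    rw [div_pow, one_pow, one_div_mul_eq_div, le_div_iff₀ (by positivity)]
    linarith
  rw [discreteEnergy, inner_map_smul_smul, hW.real_inner_map_polarization a b]
  linarith

end DiscreteEnergy

theorem stmt5_general {H : Type*} [NormedAddCommGroup H] [InnerProductSpace ℝ H]
    (T W : H →ₗ[ℝ] H)
    (hWsym : ∀ x y : H, ⟪W x, y⟫ = ⟪x, W y⟫)
    (hWpos : ∀ u : H, 0 ≤ ⟪W u, u⟫)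
    (τ : ℝ) (hτ : 0 < τ)
    (hCFL : ∀ u : H, ⟪T u, u⟫ ≥ (τ^2/4) * ⟪W u, u⟫)
    (a b : H) :
    0 ≤ (1/2 : ℝ) * ⟪T ((1/τ) • (a - b)), (1/τ) • (a - b)⟫
      + (1/2 : ℝ) * ⟪W a, b⟫ :=
  (div_nonneg (hWpos (a + b)) (by norm_num)).trans
    (inner_map_add_div_eight_le_discreteEnergy T W hWsym hτ.ne' a b (hCFL (a - b)))

theorem stmt5 {H : Type*} [NormedAddCommGroup H] [InnerProductSpace ℝ H]
    [FiniteDimensional ℝ H]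
    (T W : H →ₗ[ℝ] H)
    (hTsym : ∀ x y : H, ⟪T x, y⟫ = ⟪x, T y⟫)
    (hTpos : ∀ u : H, u ≠ 0 → 0 < ⟪T u, u⟫)
    (hWsym : ∀ x y : H, ⟪W x, y⟫ = ⟪x, W y⟫)
    (hWpos : ∀ u : H, 0 ≤ ⟪W u, u⟫)
    (τ : ℝ) (hτ : 0 < τ)
    (hCFL : ∀ u : H, ⟪T u, u⟫ ≥ (τ^2/4) * ⟪W u, u⟫)
    (a b : H) :
    0 ≤ (1/2 : ℝ) * ⟪T ((1/τ) • (a - b)), (1/τ) • (a - b)⟫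
      + (1/2 : ℝ) * ⟪W a, b⟫ :=
  stmt5_general T W hWsym hWpos τ hτ hCFL a b
end

section
/- Let H be a finite-dimensional real inner product space, T : H → H symmetric positive definite, Φ : S → ℝ with Φ(Σ) = ½⟨A Σ, Σ⟩, A symmetric positive definite on the finite-dimensional inner product space S, L : S → H linear, τ > 0, η ∈ (0,4). Assume the CFL condition Φ(Σ) ≥ (τ²/(4-η)) ⟨L Σ, T⁻¹ L Σ⟩ for all Σ ∈ S. Then for any v⁺, v ∈ H and Σ ∈ S satisfying T(v⁺ - v)/τ + L Σ = 0, the quantity ½⟨T v⁺, v⟩ + Φ(Σ) is bounded below by ½⟨T ((v⁺+v)/2), (v⁺+v)/2⟩ + (η/4) Φ(Σ); in particular it is nonnegative. -/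
/-! Split `v⁺ = m + d`, `v = m - d` with `m = (v⁺ + v)/2`, `d = (v⁺ - v)/2`. For symmetric `T`,
`⟨T v⁺, v⟩ = ⟨T m, m⟩ - ⟨T d, d⟩`, and the update gives `T d = -(τ/2) L Σ`, so
`⟨T d, d⟩ = (τ²/4) ⟨L Σ, T⁻¹ L Σ⟩`, which the CFL condition bounds by `(1 - η/4) Φ(Σ)`.
The CFL condition also forces `Φ(Σ) ≥ 0`, because `T⁻¹` is positive along with `T`. -/

open scoped RealInnerProductSpace

section

variable {H : Type*} [NormedAddCommGroup H] [InnerProductSpace ℝ H] {T : H →ₗ[ℝ] H}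

theorem LinearMap.IsSymmetric.inner_map_eq_midpoint_sub (hT : T.IsSymmetric) (x y : H) :
    ⟪T x, y⟫ = ⟪T ((1/2 : ℝ) • (x + y)), (1/2 : ℝ) • (x + y)⟫
      - ⟪T ((1/2 : ℝ) • (x - y)), (1/2 : ℝ) • (x - y)⟫ := by
  have hyx : ⟪T y, x⟫ = ⟪T x, y⟫ := by rw [hT y x, real_inner_comm]
  simp only [map_smul, map_add, map_sub, real_inner_smul_left, real_inner_smul_right,
    inner_add_left, inner_add_right, inner_sub_left, inner_sub_right, hyx]
  ring

theorem LinearMap.IsSymmetric.inner_map_self_eq_sq_mul (hT : T.IsSymmetric) {u w w' : H} {c : ℝ}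
    (hu : T u = c • w) (hw' : T w' = w) : ⟪T u, u⟫ = c ^ 2 * ⟪w, w'⟫ := by
  calc ⟪T u, u⟫ = c * ⟪T w', u⟫ := by rw [hu, hw', real_inner_smul_left]
    _ = c * ⟪w', T u⟫ := by rw [hT]
    _ = c ^ 2 * ⟪w, w'⟫ := by rw [hu, real_inner_smul_right, real_inner_comm]; ring

theorem inner_map_self_nonneg_of_pos (hT : ∀ u : H, u ≠ 0 → 0 < ⟪T u, u⟫) (u : H) :
    0 ≤ ⟪T u, u⟫ := by
  rcases eq_or_ne u 0 with rfl | hu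
  · simp
  · exact (hT u hu).le

end

theorem stmt18_general {H S : Type*} [NormedAddCommGroup H] [InnerProductSpace ℝ H]
    [NormedAddCommGroup S] [InnerProductSpace ℝ S]
    (T Tinv : H →ₗ[ℝ] H)
    (hTsym : ∀ x y : H, ⟪T x, y⟫ = ⟪x, T y⟫)
    (hTpos : ∀ u : H, u ≠ 0 → 0 < ⟪T u, u⟫)
    (hTinv : ∀ x, T (Tinv x) = x)
    (Φ : S → ℝ)
    (L : S →ₗ[ℝ] H)
    (τ η : ℝ) (hτ : 0 < τ) (hη : 0 < η) (hη4 : η < 4)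
    (hCFL : ∀ Sg : S, Φ Sg ≥ (τ^2/(4 - η)) * ⟪L Sg, Tinv (L Sg)⟫)
    (vp v : H) (Sg : S)
    (hupd : (1/τ) • T (vp - v) + L Sg = 0) :
    (1/2 : ℝ) * ⟪T ((1/2 : ℝ) • (vp + v)), (1/2 : ℝ) • (vp + v)⟫
        + (η/4) * Φ Sg
      ≤ (1/2 : ℝ) * ⟪T vp, v⟫ + Φ Sg
    ∧ 0 ≤ (1/2 : ℝ) * ⟪T vp, v⟫ + Φ Sg := by
  have hT : T.IsSymmetric := hTsym
  have hq : 0 ≤ ⟪L Sg, Tinv (L Sg)⟫ := by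
    simpa only [hTinv] using inner_map_self_nonneg_of_pos hTpos (Tinv (L Sg))
  have hCFL' : τ ^ 2 * ⟪L Sg, Tinv (L Sg)⟫ ≤ (4 - η) * Φ Sg := by
    have h := hCFL Sg
    rw [ge_iff_le, div_mul_eq_mul_div, div_le_iff₀ (by linarith)] at h
    linarith
  have hΦ : 0 ≤ Φ Sg :=
    nonneg_of_mul_nonneg_right (hCFL'.trans' (by positivity)) (by linarith)
  have hstep : T ((1/2 : ℝ) • (vp - v)) = (-(τ/2)) • L Sg := by
    have h := congrArg ((τ/2) • ·) (eq_neg_of_add_eq_zero_left hupd)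
    simp only [smul_smul, smul_neg] at h
    rwa [show τ / 2 * (1 / τ) = 1 / 2 by field_simp, ← map_smul, ← neg_smul] at h
  have hd := hT.inner_map_self_eq_sq_mul hstep (hTinv (L Sg))
  have hm := inner_map_self_nonneg_of_pos hTpos ((1/2 : ℝ) • (vp + v))
  rw [hT.inner_map_eq_midpoint_sub vp v, hd]
  constructor <;> nlinarith [mul_nonneg hη.le hΦ]

theorem stmt18 {H S : Type*} [NormedAddCommGroup H] [InnerProductSpace ℝ H]
    [FiniteDimensional ℝ H] [NormedAddCommGroup S] [InnerProductSpace ℝ S]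
    [FiniteDimensional ℝ S]
    (T Tinv : H →ₗ[ℝ] H)
    (hTsym : ∀ x y : H, ⟪T x, y⟫ = ⟪x, T y⟫)
    (hTpos : ∀ u : H, u ≠ 0 → 0 < ⟪T u, u⟫)
    (hTinv : ∀ x, T (Tinv x) = x) (hTinv' : ∀ x, Tinv (T x) = x)
    (A : S →ₗ[ℝ] S)
    (hAsym : ∀ x y : S, ⟪A x, y⟫ = ⟪x, A y⟫)
    (hApos : ∀ Sg : S, Sg ≠ 0 → 0 < ⟪A Sg, Sg⟫)
    (Φ : S → ℝ) (hΦ : ∀ Sg : S, Φ Sg = (1/2 : ℝ) * ⟪A Sg, Sg⟫)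
    (L : S →ₗ[ℝ] H)
    (τ η : ℝ) (hτ : 0 < τ) (hη : 0 < η) (hη4 : η < 4)
    (hCFL : ∀ Sg : S, Φ Sg ≥ (τ^2/(4 - η)) * ⟪L Sg, Tinv (L Sg)⟫)
    (vp v : H) (Sg : S)
    (hupd : (1/τ) • T (vp - v) + L Sg = 0) :
    (1/2 : ℝ) * ⟪T ((1/2 : ℝ) • (vp + v)), (1/2 : ℝ) • (vp + v)⟫
        + (η/4) * Φ Sg
      ≤ (1/2 : ℝ) * ⟪T vp, v⟫ + Φ Sg
    ∧ 0 ≤ (1/2 : ℝ) * ⟪T vp, v⟫ + Φ Sg :=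
  stmt18_general T Tinv hTsym hTpos hTinv Φ L τ η hτ hη hη4 hCFL vp v Sg hupd
end
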